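/- Let T(n,r) be the Turán graph, i.e., the complete r-partite graph on n vertices whose r independent classes have sizes as equal as possible, where 1 ≤ r ≤ n. Write n = kr + s with 0 < s ≤ r (so k = ⌈n/r⌉ − 1 when r does not divide n, and s is the number of classes of the larger size ⌈n/r⌉, with s = r when r divides n). Then ρ(T(n,r)) = ⌈n/r⌉ · (n + s)/2. -/

import Mathlib

/-!
Lower bound: colour a graph `G` greedily, the `l`-th colour class being a largest independent set
among the vertices not yet coloured. A rainbow copy of `T(n,r)` has at least `n - l` vertices of
colour `≥ l`; by pigeonhole more than `(n - 1 - l) / r` of them lie in one part of `T(n,r)`, and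
these form an independent set among the vertices uncoloured at stage `l`, so the `l`-th class is at
least that large. Summing over `l < n`, `G` has at least `∑ j < n, (j / r + 1)` vertices.

Upper bound: blow the `j`-th vertex of `T(n,r)` up into a clique of size `j / r + 1`, one more than
the number of earlier vertices in its part. Picking one vertex from each clique in order, some
vertex of the clique has a colour not used by the earlier picks in the same part, so the picks form
a rainbow induced copy of `T(n,r)`.
-/

/-- `ArrowsR G H` (written `G →r H`) means: every proper vertex coloring of `G`
contains a rainbow induced subgraph isomorphic to `H`, i.e. an induced copy of `H`
(a graph embedding) whose vertices receive pairwise distinct colors. -/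
def ArrowsR {α β : Type} (G : SimpleGraph α) (H : SimpleGraph β) : Prop :=
  ∀ c : α → ℕ, (∀ u v : α, G.Adj u v → c u ≠ c v) →
    ∃ f : H ↪g G, Function.Injective fun h => c (f h)

/-- `rho H` is the minimum number of vertices of a graph `G` with `G →r H`. -/
noncomputable def rho {β : Type} (H : SimpleGraph β) : ℕ :=
  sInf {m : ℕ | ∃ G : SimpleGraph (Fin m), ArrowsR G H}

open Finset

theorem Fintype.card_sub_le_card_filter_le {α : Type*} [Fintype α] {g : α → ℕ}
    (hg : g.Injective) (l : ℕ) : Fintype.card α - l ≤ #{a | l ≤ g a} := by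
  have hlow : #{a | ¬l ≤ g a} ≤ l := by
    simpa using card_le_card_of_injOn g (t := range l) (fun a ha => by simpa using ha) hg.injOn
  have hsplit := card_filter_add_card_filter_not (s := univ) (fun a => l ≤ g a)
  rw [card_univ] at hsplit
  omega

theorem sum_range_div_add_one_of_le {r s : ℕ} (hs : s ≤ r) :
    ∑ j ∈ range s, (j / r + 1) = s := by
  rw [sum_congr rfl fun j hj => show j / r + 1 = 1 by
    rw [Nat.div_eq_of_lt ((mem_range.1 hj).trans_le hs)]]
  simp

theorem sum_range_add_div_add_one {r : ℕ} (hr : 0 < r) (m : ℕ) :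
    ∑ j ∈ range (m + r), (j / r + 1) = ∑ j ∈ range m, (j / r + 1) + m + r := by
  rw [add_comm m r, sum_range_add, sum_range_div_add_one_of_le le_rfl]
  simp only [add_comm r, Nat.add_div_right _ hr, sum_add_distrib, sum_const, card_range,
    smul_eq_mul, mul_one]

theorem two_mul_sum_range_div_add_one {r s : ℕ} (hr : 0 < r) (hs : s ≤ r) (k : ℕ) :
    2 * ∑ j ∈ range (k * r + s), (j / r + 1) = (k + 1) * (k * r + s + s) := by
  induction k with
  | zero => simp [sum_range_div_add_one_of_le hs, two_mul]
  | succ k ih =>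
    rw [show (k + 1) * r + s = k * r + s + r by ring, sum_range_add_div_add_one hr, mul_add,
      mul_add, ih]
    ring

namespace SimpleGraph

theorem IsIndepSet.image_embedding {V W : Type*} {G : SimpleGraph V} {H : SimpleGraph W}
    (f : H ↪g G) {s : Set W} (hs : H.IsIndepSet s) : G.IsIndepSet (f '' s) := by
  rintro _ ⟨a, ha, rfl⟩ _ ⟨b, hb, rfl⟩ hne hadj
  exact hs ha hb (ne_of_apply_ne f hne) (f.map_adj_iff.1 hadj)

theorem exists_coloring_maximum_indepSet_classes {V : Type*} (G : SimpleGraph V) (A : Finset V) :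
    ∃ c : V → ℕ, (∀ u ∈ A, ∀ v ∈ A, G.Adj u v → c u ≠ c v) ∧
      ∀ (l : ℕ) (T : Finset V), T ⊆ A → G.IsIndepSet T → (∀ v ∈ T, l ≤ c v) →
        #T ≤ #{v ∈ A | c v = l} := by
  classical
  induction A using Finset.strongInduction with
  | H A ih =>
  obtain rfl | ⟨a, ha⟩ := A.eq_empty_or_nonempty
  · exact ⟨0, by simp, fun l T hT _ _ => by simp [subset_empty.1 hT]⟩
  obtain ⟨I, hI, hImax⟩ :=
    Finset.exists_max_image (A.powerset.filter fun T : Finset V => G.IsIndepSet ↑T) card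
      ⟨∅, by simp⟩
  rw [mem_filter, mem_powerset] at hI
  have hmax : ∀ T ⊆ A, G.IsIndepSet T → #T ≤ #I := fun T hTA hT =>
    hImax T (by simp [hTA, hT])
  have hIne : I.Nonempty := card_pos.1 (hmax {a} (by simpa) (by simp))
  obtain ⟨c, hc, hcmax⟩ := ih (A \ I) (sdiff_ssubset hI.1 hIne)
  refine ⟨fun v => if v ∈ I then 0 else c v + 1, ?_, ?_⟩
  · intro u hu v hv huv
    by_cases huI : u ∈ I <;> by_cases hvI : v ∈ I <;> simp only [huI, hvI, if_true, if_false]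
    · exact absurd huv (hI.2 huI hvI (G.ne_of_adj huv))
    · omega
    · omega
    · exact fun h => hc u (mem_sdiff.2 ⟨hu, huI⟩) v (mem_sdiff.2 ⟨hv, hvI⟩) huv (by omega)
  · rintro (_ | l) T hTA hT hTl
    · exact (hmax T hTA hT).trans (card_le_card fun v hv => by simp [hI.1 hv, hv])
    · have hTI : ∀ v ∈ T, v ∉ I := fun v hv hvI => by simpa [hvI] using hTl v hv
      calc #T ≤ #{v ∈ A \ I | c v = l} :=
            hcmax l T (fun v hv => mem_sdiff.2 ⟨hTA hv, hTI v hv⟩) hT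
              (fun v hv => by simpa [hTI v hv] using hTl v hv)
        _ ≤ #{v ∈ A | (if v ∈ I then 0 else c v + 1) = l + 1} :=
            card_le_card fun v hv => by simp_all

theorem turanGraph_exists_isIndepSet {n r : ℕ} (hr : 0 < r) (S : Finset (Fin n)) {q : ℕ}
    (hq : r * q < #S) : ∃ T ⊆ S, (turanGraph n r).IsIndepSet T ∧ q < #T := by
  obtain ⟨i, -, hi⟩ := exists_lt_card_fiber_of_mul_lt_card_of_maps_to
    (f := fun v : Fin n => (v : ℕ) % r) (fun v _ => mem_range.2 (Nat.mod_lt _ hr))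
    (by rwa [card_range])
  refine ⟨{v ∈ S | (v : ℕ) % r = i}, filter_subset _ _, ?_, hi⟩
  intro u hu v hv _ huv
  rw [coe_filter] at hu hv
  exact huv (hu.2.trans hv.2.symm)

theorem card_lt_not_adj_turanGraph_le {n r : ℕ} (v : Fin n) :
    #{u | u < v ∧ ¬(turanGraph n r).Adj u v} ≤ v / r := by
  calc #{u | u < v ∧ ¬(turanGraph n r).Adj u v}
      ≤ #{e ∈ range v | r ∣ e + 1} := by
        refine card_le_card_of_injOn (fun u => (v : ℕ) - 1 - u) (fun u hu => ?_) ?_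
        · obtain ⟨huv, hmod⟩ : u < v ∧ (u : ℕ) % r = v % r := by
            simpa [turanGraph_adj] using hu
          have hdvd := Nat.dvd_of_mod_eq_zero (Nat.sub_mod_eq_zero_of_mod_eq hmod.symm)
          have hsub : (v : ℕ) - 1 - u + 1 = v - u := by omega
          simpa [hsub] using ⟨by omega, hdvd⟩
        · intro u hu u' hu' h
          simp only [coe_filter, Set.mem_ofPred_eq] at hu hu' h
          ext
          omega
    _ = v / r := Nat.card_multiples _ _

def cliqueBlowup {β : Type*} (H : SimpleGraph β) (w : β → ℕ) :
    SimpleGraph (Σ b, Fin (w b)) where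
  Adj p q := p ≠ q ∧ (p.1 = q.1 ∨ H.Adj p.1 q.1)
  symm := ⟨fun _ _ h => ⟨h.1.symm, h.2.imp Eq.symm Adj.symm⟩⟩
  loopless := ⟨fun _ h => h.1 rfl⟩

section cliqueBlowup

variable {n : ℕ} {H : SimpleGraph (Fin n)} {w : Fin n → ℕ} {c : (Σ v, Fin (w v)) → ℕ}

theorem cliqueBlowup.exists_color_notMem (hc : ∀ p q, (H.cliqueBlowup w).Adj p q → c p ≠ c q)
    (v : Fin n) {F : Finset ℕ} (hF : #F < w v) : ∃ i, c ⟨v, i⟩ ∉ F := by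
  by_contra! hall
  have hinj : Set.InjOn (fun i => c ⟨v, i⟩) (univ : Finset (Fin (w v))) :=
    fun i _ j _ hij => by_contra fun hne =>
      hc ⟨v, i⟩ ⟨v, j⟩ ⟨fun h => hne (eq_of_heq (Sigma.mk.inj_iff.1 h).2), .inl rfl⟩ hij
  have := card_le_card_of_injOn _ (fun i _ => hall i) hinj
  simp only [card_univ, Fintype.card_fin] at this
  omega

theorem cliqueBlowup.exists_transversal_color_ne_of_not_adj [DecidableRel H.Adj]
    (hw : ∀ v, #{u | u < v ∧ ¬H.Adj u v} < w v)
    (hc : ∀ p q, (H.cliqueBlowup w).Adj p q → c p ≠ c q) :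
    ∃ x : (v : Fin n) → Fin (w v),
      ∀ u v : Fin n, u < v → ¬H.Adj u v → c ⟨u, x u⟩ ≠ c ⟨v, x v⟩ := by
  suffices ∀ t ≤ n, ∃ x : (v : Fin n) → Fin (w v),
      ∀ u v : Fin n, u < v → (v : ℕ) < t → ¬H.Adj u v →
        c ⟨u, x u⟩ ≠ c ⟨v, x v⟩ by
    obtain ⟨x, hx⟩ := this n le_rfl
    exact ⟨x, fun u v huv => hx u v huv v.2⟩
  intro t ht
  induction t with
  | zero => exact ⟨fun v => ⟨0, (Nat.zero_le _).trans_lt (hw v)⟩, by omega⟩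
  | succ t ih =>
    obtain ⟨x, hx⟩ := ih (by omega)
    obtain ⟨v₀, rfl⟩ : ∃ v₀ : Fin n, (v₀ : ℕ) = t := ⟨⟨t, ht⟩, rfl⟩
    obtain ⟨i, hi⟩ := exists_color_notMem hc v₀
      (F := image (fun u => c ⟨u, x u⟩) {u | u < v₀ ∧ ¬H.Adj u v₀})
      (card_image_le.trans_lt (hw v₀))
    refine ⟨Function.update x v₀ i, fun u v huv hvt hnadj => ?_⟩
    have hu : Function.update x v₀ i u = x u := Function.update_of_ne (by omega) _ _
    rw [hu]
    rcases Nat.lt_succ_iff_lt_or_eq.1 hvt with hvt | hvt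
    · rw [Function.update_of_ne (by omega)]
      exact hx u v huv hvt hnadj
    · obtain rfl : v = v₀ := Fin.ext hvt
      rw [Function.update_self]
      exact fun h => hi (mem_image.2 ⟨u, by simp [huv, hnadj], h⟩)

theorem arrowsR_cliqueBlowup [DecidableRel H.Adj] (hw : ∀ v, #{u | u < v ∧ ¬H.Adj u v} < w v) :
    ArrowsR (H.cliqueBlowup w) H := by
  intro c hc
  obtain ⟨x, hx⟩ := cliqueBlowup.exists_transversal_color_ne_of_not_adj hw hc
  refine ⟨⟨⟨fun v => ⟨v, x v⟩, fun u v h => congrArg Sigma.fst h⟩, ?_⟩, ?_⟩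
  · intro u v
    change (_ ≠ _ ∧ _) ↔ _
    constructor
    · rintro ⟨hne, rfl | h⟩
      · exact absurd rfl hne
      · exact h
    · exact fun h => ⟨fun he => h.ne (congrArg Sigma.fst he), .inr h⟩
  · intro u v huv
    by_contra hne
    by_cases hadj : H.Adj u v
    · exact hc _ _ ⟨fun he => hne (congrArg Sigma.fst he), .inr hadj⟩ huv
    · rcases lt_or_gt_of_ne hne with h | h
      · exact hx u v h hadj huv
      · exact hx v u h (fun h' => hadj h'.symm) huv.symm

end cliqueBlowup

end SimpleGraph

open SimpleGraph

theorem ArrowsR.of_iso {α α' β : Type} {G : SimpleGraph α} {G' : SimpleGraph α'}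
    {H : SimpleGraph β} (e : G ≃g G') (h : ArrowsR G H) : ArrowsR G' H := by
  intro c hc
  obtain ⟨f, hf⟩ := h (c ∘ e) fun u v huv => hc _ _ (e.map_adj_iff.2 huv)
  exact ⟨e.toEmbedding.comp f, hf⟩

theorem ArrowsR.exists_fin {α β : Type} [Fintype α] {G : SimpleGraph α} {H : SimpleGraph β}
    (h : ArrowsR G H) : ∃ G' : SimpleGraph (Fin (Fintype.card α)), ArrowsR G' H :=
  ⟨_, h.of_iso (Iso.map (Fintype.equivFin α) G)⟩

theorem ArrowsR.sum_div_add_one_le_card {V : Type} [Fintype V] {G : SimpleGraph V} {n r : ℕ}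
    (hr : 0 < r) (h : ArrowsR G (turanGraph n r)) :
    ∑ j ∈ range n, (j / r + 1) ≤ Fintype.card V := by
  obtain ⟨c, hc, hcmax⟩ := G.exists_coloring_maximum_indepSet_classes univ
  obtain ⟨f, hf⟩ := h c fun u v => hc u (mem_univ u) v (mem_univ v)
  have hclass : ∀ l < n, (n - 1 - l) / r + 1 ≤ #{v | c v = l} := by
    intro l hl
    have hlarge := Fintype.card_sub_le_card_filter_le hf l
    rw [Fintype.card_fin] at hlarge
    obtain ⟨T, hTS, hT, hqT⟩ := turanGraph_exists_isIndepSet hr {v | l ≤ c (f v)}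
      (q := (n - 1 - l) / r) ((Nat.mul_div_le _ _).trans_lt (by omega))
    calc (n - 1 - l) / r + 1 ≤ #T := hqT
      _ = #(T.map f.toEmbedding) := (card_map _).symm
      _ ≤ #{v | c v = l} := by
        refine hcmax l _ (subset_univ _) (by simpa using hT.image_embedding f) ?_
        simp only [mem_map]
        rintro _ ⟨v, hv, rfl⟩
        simpa using hTS hv
  calc ∑ j ∈ range n, (j / r + 1) = ∑ l ∈ range n, ((n - 1 - l) / r + 1) :=
        (sum_range_reflect _ n).symm
    _ ≤ ∑ l ∈ range n, #{v | c v = l} := sum_le_sum fun l hl => hclass l (mem_range.1 hl)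
    _ = #{v | c v ∈ range n} := sum_card_fiberwise_eq_card_filter _ _ _
    _ ≤ Fintype.card V := card_le_univ _

theorem rho_turanGraph {n r : ℕ} (hr : 0 < r) :
    rho (turanGraph n r) = ∑ j ∈ range n, (j / r + 1) := by
  have hblowup : ArrowsR ((turanGraph n r).cliqueBlowup fun v => v / r + 1) (turanGraph n r) :=
    arrowsR_cliqueBlowup fun v => Nat.lt_succ_of_le (card_lt_not_adj_turanGraph_le v)
  have hcard : Fintype.card (Σ v : Fin n, Fin (v / r + 1)) = ∑ j ∈ range n, (j / r + 1) := by
    simp [Fintype.card_sigma, Fin.sum_univ_eq_sum_range (fun j => j / r + 1)]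
  refine le_antisymm (hcard ▸ Nat.sInf_le hblowup.exists_fin) ?_
  obtain ⟨G, hG⟩ :=
    Nat.sInf_mem (s := {m | ∃ G : SimpleGraph (Fin m), ArrowsR G (turanGraph n r)})
      ⟨_, hblowup.exists_fin⟩
  simpa [rho] using hG.sum_div_add_one_le_card hr

theorem stmt6_general (n r k s : ℕ) (hr : 1 ≤ r)
    (hn : n = k * r + s) (hsr : s ≤ r) :
    2 * rho (SimpleGraph.turanGraph n r) = (k + 1) * (n + s) := by
  rw [rho_turanGraph hr, hn, two_mul_sum_range_div_add_one hr hsr]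

/-- For the Turán graph `T(n,r)` with `1 ≤ r ≤ n`, `n = k·r + s`, `0 < s ≤ r`
(so `⌈n/r⌉ = k + 1` and `s` is the number of larger classes):
`ρ(T(n,r)) = ⌈n/r⌉·(n+s)/2`, stated as `2·ρ(T(n,r)) = (k+1)·(n+s)`. -/
theorem stmt6 (n r k s : ℕ) (hr : 1 ≤ r) (hrn : r ≤ n)
    (hn : n = k * r + s) (hs : 0 < s) (hsr : s ≤ r) :
    2 * rho (SimpleGraph.turanGraph n r) = (k + 1) * (n + s) :=
  stmt6_general n r k s hr hn hsr
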